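/- arXiv:2204.10252 — 3 statements merged into one kernel-verified Lean document; each statement's English description precedes it below -/
import Mathlib

section
/- Let E = EuclideanSpace ℂ (Fin n) and let g : E → ℝ be convex with respect to the real scalar structure on E. Suppose v₁, v₂ ∈ E, u₁ minimizes x ↦ (1/2)‖x − v₁‖² + g x over E, and u₂ minimizes x ↦ (1/2)‖x − v₂‖² + g x over E. Then ‖u₁ − u₂‖ ≤ ‖v₁ − v₂‖. (Non-expansiveness of the proximal operator, Lemma 2.2.) -/
open RealInnerProductSpace

lemma prox_key {n : ℕ} (g : EuclideanSpace ℂ (Fin n) → ℝ) (hg : ConvexOn ℝ Set.univ g)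
    (v u : EuclideanSpace ℂ (Fin n))
    (h : ∀ x : EuclideanSpace ℂ (Fin n),
      (1/2) * ‖u - v‖^2 + g u ≤ (1/2) * ‖x - v‖^2 + g x)
    (x : EuclideanSpace ℂ (Fin n)) {t : ℝ} (ht0 : 0 < t) (ht1 : t < 1) :
    0 ≤ ⟪u - v, x - u⟫ + t / 2 * ‖x - u‖^2 + (g x - g u) := by
  have hx := h (u + t • (x - u))
  have hconv := hg.2 (Set.mem_univ u) (Set.mem_univ x)
    (by linarith : (0:ℝ) ≤ 1 - t) ht0.le (by ring)
  have heq : (1 - t) • u + t • x = u + t • (x - u) := by module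
  rw [heq] at hconv
  have hnorm : ‖u + t • (x - u) - v‖^2
      = ‖u - v‖^2 + 2 * (t * ⟪u - v, x - u⟫) + t^2 * ‖x - u‖^2 := by
    have h' : u + t • (x - u) - v = (u - v) + t • (x - u) := by module
    rw [h', norm_add_sq_real, real_inner_smul_right, norm_smul]
    simp [abs_of_pos ht0, mul_pow]
  rw [hnorm] at hx
  simp only [smul_eq_mul] at hconv
  nlinarith [hx, hconv, ht0]

/-- Non-expansiveness of the proximal operator (Lemma 2.2). -/
theorem prox_nonexpansive (n : ℕ)
    (g : EuclideanSpace ℂ (Fin n) → ℝ) (hg : ConvexOn ℝ Set.univ g)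
    (v₁ v₂ u₁ u₂ : EuclideanSpace ℂ (Fin n))
    (h₁ : ∀ x : EuclideanSpace ℂ (Fin n),
      (1/2) * ‖u₁ - v₁‖^2 + g u₁ ≤ (1/2) * ‖x - v₁‖^2 + g x)
    (h₂ : ∀ x : EuclideanSpace ℂ (Fin n),
      (1/2) * ‖u₂ - v₂‖^2 + g u₂ ≤ (1/2) * ‖x - v₂‖^2 + g x) :
    ‖u₁ - u₂‖ ≤ ‖v₁ - v₂‖ := by
  have hCS := real_inner_le_norm (v₁ - v₂) (u₁ - u₂)
  have key : ∀ t : ℝ, 0 < t → t < 1 →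
      (1 - t) * ‖u₁ - u₂‖^2 ≤ ⟪v₁ - v₂, u₁ - u₂⟫ := by
    intro t ht0 ht1
    have k1 := prox_key g hg v₁ u₁ h₁ u₂ ht0 ht1
    have k2 := prox_key g hg v₂ u₂ h₂ u₁ ht0 ht1
    have hnn : ‖u₂ - u₁‖ = ‖u₁ - u₂‖ := by rw [← norm_neg]; congr 1; abel
    rw [hnn] at k1
    have hid : ⟪u₁ - v₁, u₂ - u₁⟫ + ⟪u₂ - v₂, u₁ - u₂⟫
        = ⟪v₁ - v₂, u₁ - u₂⟫ - ‖u₁ - u₂‖^2 := by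
      simp only [inner_sub_left, inner_sub_right, ← real_inner_self_eq_norm_sq]
      ring
    linarith [k1, k2]
  have hsq : ‖u₁ - u₂‖^2 ≤ ‖v₁ - v₂‖ * ‖u₁ - u₂‖ := by
    by_contra hc
    push_neg at hc
    have hb : 0 ≤ ‖v₁ - v₂‖ * ‖u₁ - u₂‖ := mul_nonneg (norm_nonneg _) (norm_nonneg _)
    set b := ‖v₁ - v₂‖ * ‖u₁ - u₂‖ with hbdef
    set c := ‖u₁ - u₂‖^2 with hcdef
    have hcpos : 0 < c := lt_of_le_of_lt hb hc
    set t : ℝ := (c - b) / (2 * c) with htdef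
    have ht0 : 0 < t := div_pos (by linarith) (by linarith)
    have ht1 : t < 1 := by rw [div_lt_one (by linarith)]; linarith
    have ht := key t ht0 ht1
    have h1t : (1 - t) * c = (c + b) / 2 := by
      field_simp [htdef]
      have h2 : t * (2 * c) = c - b := by
        rw [htdef]; exact div_mul_cancel₀ _ (ne_of_gt (by linarith))
      linear_combination -h2
    rw [h1t] at ht
    linarith
  rcases eq_or_lt_of_le (norm_nonneg (u₁ - u₂)) with h0 | h0
  · rw [← h0]; exact norm_nonneg _
  · nlinarith [hsq, h0]
end

section
/- Let E = EuclideanSpace ℂ (Fin n) and F = EuclideanSpace ℂ (Fin m), A : E →L[ℂ] F with adjoint A† = ContinuousLinearMap.adjoint A, b ∈ F, and let g : E → ℝ be convex with respect to the real scalar structure. Suppose x⋆ ∈ E minimizes z ↦ (1/2)‖z − (x⋆ − A†(A x⋆ − b))‖² + g z over E (the fixed-point property), and suppose for some x̂ ∈ E the point x⁺ minimizes z ↦ (1/2)‖z − (x̂ − A†(A x̂ − b))‖² + g z over E (one step of proximal gradient descent from x̂). Then ‖x⁺ − x⋆‖ ≤ ‖(ContinuousLinearMap.id − A† ∘L A)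 (x̂ − x⋆)‖. (Error contraction bound for proximal gradient descent, Theorem 2.3.) -/
open RealInnerProductSpace

lemma prox_subgrad {E : Type*} [NormedAddCommGroup E] [InnerProductSpace ℝ E]
    (g : E → ℝ) (hg : ConvexOn ℝ Set.univ g) (v u : E)
    (h : ∀ z, (1/2 : ℝ) * ‖u - v‖^2 + g u ≤ (1/2) * ‖z - v‖^2 + g z) :
    ∀ z, ⟪v - u, z - u⟫ ≤ g z - g u := by
  intro z
  set c : ℝ := ⟪u - v, z - u⟫ + g z - g u with hc
  suffices h0 : 0 ≤ c by
    have : ⟪v - u, z - u⟫ = -⟪u - v, z - u⟫ := by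
      rw [← inner_neg_left]; congr 1; abel
    linarith [this]
  have key : ∀ t : ℝ, 0 < t → t ≤ 1 → 0 ≤ c + t/2 * ‖z - u‖^2 := by
    intro t ht ht1
    have hconv := hg.2 (Set.mem_univ u) (Set.mem_univ z) (by linarith : (0:ℝ) ≤ 1 - t)
      (le_of_lt ht) (by ring)
    have heq : (1-t) • u + t • z = u + t • (z - u) := by
      rw [smul_sub, sub_smul, one_smul]; abel
    rw [heq] at hconv
    have hmin := h (u + t • (z - u))
    have hnorm : ‖u + t • (z - u) - v‖^2
        = ‖u - v‖^2 + 2 * (t * ⟪u - v, z - u⟫) + (t * ‖z - u‖)^2 := by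
      have : u + t • (z - u) - v = (u - v) + t • (z - u) := by abel
      rw [this, @norm_add_sq_real, real_inner_smul_right, norm_smul,
        Real.norm_eq_abs, abs_of_pos ht]
    rw [hnorm] at hmin
    have h2 : 0 ≤ t * ⟪u - v, z - u⟫ + (t * ‖z - u‖)^2 / 2 + (g (u + t • (z-u)) - g u) := by
      nlinarith [hmin]
    have h3 : g (u + t • (z - u)) - g u ≤ t * (g z - g u) := by
      simp only [smul_eq_mul] at hconv; nlinarith [hconv]
    have h4 : 0 ≤ t * ⟪u - v, z - u⟫ + (t * ‖z - u‖)^2 / 2 + t * (g z - g u) := by linarith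
    have h5 : 0 ≤ t * (c + t/2 * ‖z - u‖^2) := by
      have : t * (c + t/2 * ‖z - u‖^2)
          = t * ⟪u - v, z - u⟫ + (t * ‖z - u‖)^2 / 2 + t * (g z - g u) := by
        rw [hc]; ring
      linarith [this ▸ h4]
    exact nonneg_of_mul_nonneg_right h5 ht
  by_contra hneg
  push_neg at hneg
  set s : ℝ := ‖z - u‖^2 with hs
  have hs0 : 0 ≤ s := sq_nonneg _
  set t : ℝ := min 1 ((-c)/(s+1)) with htdef
  have ht0 : 0 < t := lt_min one_pos (div_pos (by linarith) (by linarith))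
  have ht1 : t ≤ 1 := min_le_left _ _
  have := key t ht0 ht1
  have htle : t ≤ (-c)/(s+1) := min_le_right _ _
  have : t/2 * s < -c := by
    have h1 : t * (s+1) ≤ -c := by
      rw [← le_div_iff₀ (by linarith : (0:ℝ) < s+1)]; exact htle
    nlinarith
  linarith [key t ht0 ht1]
/-- Error contraction bound for proximal gradient descent (Theorem 2.3). -/
theorem pgd_error_contraction (n m : ℕ)
    (A : EuclideanSpace ℂ (Fin n) →L[ℂ] EuclideanSpace ℂ (Fin m))
    (b : EuclideanSpace ℂ (Fin m))
    (g : EuclideanSpace ℂ (Fin n) → ℝ) (hg : ConvexOn ℝ Set.univ g)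
    (xstar xhat xplus : EuclideanSpace ℂ (Fin n))
    (hstar : ∀ z : EuclideanSpace ℂ (Fin n),
      (1/2) * ‖xstar - (xstar - (ContinuousLinearMap.adjoint A) (A xstar - b))‖^2
          + g xstar ≤
      (1/2) * ‖z - (xstar - (ContinuousLinearMap.adjoint A) (A xstar - b))‖^2 + g z)
    (hplus : ∀ z : EuclideanSpace ℂ (Fin n),
      (1/2) * ‖xplus - (xhat - (ContinuousLinearMap.adjoint A) (A xhat - b))‖^2
          + g xplus ≤
      (1/2) * ‖z - (xhat - (ContinuousLinearMap.adjoint A) (A xhat - b))‖^2 + g z) :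
    ‖xplus - xstar‖ ≤
      ‖(ContinuousLinearMap.id ℂ (EuclideanSpace ℂ (Fin n))
        - (ContinuousLinearMap.adjoint A).comp A) (xhat - xstar)‖ := by
  set v := xstar - (ContinuousLinearMap.adjoint A) (A xstar - b) with hv
  set y := xhat - (ContinuousLinearMap.adjoint A) (A xhat - b) with hy
  have h1 := prox_subgrad g hg v xstar hstar xplus
  have h2 := prox_subgrad g hg y xplus hplus xstar
  have hsum : ⟪v - xstar, xplus - xstar⟫ + ⟪y - xplus, xstar - xplus⟫ ≤ 0 := by linarith
  have hkey : ‖xplus - xstar‖^2 ≤ ⟪y - v, xplus - xstar⟫ := by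
    have e1 : ⟪y - xplus, xstar - xplus⟫ = -⟪y - xplus, xplus - xstar⟫ := by
      rw [← inner_neg_right]; congr 1; abel
    have e2 : ⟪y - xplus, xplus - xstar⟫
        = ⟪y - v, xplus - xstar⟫ + ⟪v - xstar, xplus - xstar⟫ - ⟪xplus - xstar, xplus - xstar⟫ := by
      rw [← inner_add_left, ← inner_sub_left]; congr 1; abel
    rw [real_inner_self_eq_norm_sq] at e2
    rw [e1, e2] at hsum
    linarith
  have hCS : ⟪y - v, xplus - xstar⟫ ≤ ‖y - v‖ * ‖xplus - xstar‖ := real_inner_le_norm _ _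
  have heq : (ContinuousLinearMap.id ℂ (EuclideanSpace ℂ (Fin n))
        - (ContinuousLinearMap.adjoint A).comp A) (xhat - xstar) = y - v := by
    simp only [ContinuousLinearMap.sub_apply, ContinuousLinearMap.id_apply,
      ContinuousLinearMap.comp_apply, map_sub, hy, hv]
    abel
  rw [heq]
  nlinarith [norm_nonneg (xplus - xstar), norm_nonneg (y - v), hkey, hCS]
end

section
/- Let E = EuclideanSpace ℂ (Fin n) and F = EuclideanSpace ℂ (Fin m), A : E →L[ℂ] F with adjoint A† = ContinuousLinearMap.adjoint A, b ∈ F, and let g : E → ℝ be convex with respect to the real scalar structure. Suppose x⋆ ∈ E minimizes z ↦ (1/2)‖z − (x⋆ − A†(A x⋆ − b))‖² + g z over E, and for some x̂ ∈ E the point x⁺ minimizes z ↦ (1/2)‖z − (x̂ − A†(A x̂ − b))‖² + g z over E. Write x̂ − x⋆ = s + t with s ∈ ker A and t in the orthogonal complement of ker A. Then ‖x⁺ − x⋆‖² ≤ ‖(ContinuousLinearMap.id − A† ∘L A) t‖² + ‖s‖². (Null-space split of the PGD error bound, equation (2.13).) -/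
open InnerProductSpace

lemma prox_subgrad_ineq {E : Type*} [NormedAddCommGroup E] [InnerProductSpace ℝ E]
    (g : E → ℝ) (hg : ConvexOn ℝ Set.univ g) (v u : E)
    (hmin : ∀ z, (1/2) * ‖u - v‖^2 + g u ≤ (1/2) * ‖z - v‖^2 + g z)
    (z : E) : ⟪v - u, z - u⟫_ℝ ≤ g z - g u := by
  have key : ∀ θ : ℝ, 0 < θ → θ ≤ 1 →
      ⟪v - u, z - u⟫_ℝ ≤ g z - g u + θ * ((1/2) * ‖z - u‖^2) := by
    intro θ hθ0 hθ1
    have hw : u + θ • (z - u) = (1 - θ) • u + θ • z := by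
      rw [smul_sub, sub_smul, one_smul]; abel
    have hconv := hg.2 (Set.mem_univ u) (Set.mem_univ z) (by linarith : (0:ℝ) ≤ 1 - θ)
      hθ0.le (by ring)
    rw [← hw] at hconv
    have hm := hmin (u + θ • (z - u))
    have hexp : ‖u + θ • (z - u) - v‖^2
        = ‖u - v‖^2 + 2 * (θ * ⟪u - v, z - u⟫_ℝ) + θ^2 * ‖z - u‖^2 := by
      have : u + θ • (z - u) - v = (u - v) + θ • (z - u) := by abel
      rw [this, norm_add_sq_real, real_inner_smul_right, norm_smul]
      simp [mul_pow, abs_of_pos hθ0]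
    rw [hexp] at hm
    have hi : ⟪u - v, z - u⟫_ℝ = - ⟪v - u, z - u⟫_ℝ := by
      rw [← inner_neg_left]; congr 1; abel
    rw [hi] at hm
    simp only [smul_eq_mul] at hconv
    have h2 : θ * ⟪v - u, z - u⟫_ℝ ≤ θ * (g z - g u) + θ^2 * ((1/2) * ‖z - u‖^2) := by
      nlinarith [hm, hconv]
    have := (mul_le_mul_iff_right₀ hθ0).mp (by nlinarith [h2] :
      θ * ⟪v - u, z - u⟫_ℝ ≤ θ * ((g z - g u) + θ * ((1/2) * ‖z - u‖^2)))
    nlinarith [this, mul_pos hθ0 hθ0]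
  refine le_of_forall_pos_le_add ?_
  intro ε hε
  set K := (1/2) * ‖z - u‖^2 with hK
  have hK0 : 0 ≤ K := by positivity
  have hθ0 : 0 < min 1 (ε / (K + 1)) := lt_min one_pos (by positivity)
  have h := key _ hθ0 (min_le_left _ _)
  have : min 1 (ε / (K + 1)) * K ≤ ε := by
    calc min 1 (ε / (K + 1)) * K ≤ (ε / (K + 1)) * K :=
          mul_le_mul_of_nonneg_right (min_le_right _ _) hK0
      _ ≤ ε := by
          rw [div_mul_eq_mul_div, div_le_iff₀ (by positivity)]
          nlinarith
  linarith

lemma prox_nonexpansive_s11 {E : Type*} [NormedAddCommGroup E] [InnerProductSpace ℝ E]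
    (g : E → ℝ) (hg : ConvexOn ℝ Set.univ g) (v₁ v₂ u₁ u₂ : E)
    (h1 : ∀ z, (1/2) * ‖u₁ - v₁‖^2 + g u₁ ≤ (1/2) * ‖z - v₁‖^2 + g z)
    (h2 : ∀ z, (1/2) * ‖u₂ - v₂‖^2 + g u₂ ≤ (1/2) * ‖z - v₂‖^2 + g z) :
    ‖u₁ - u₂‖ ≤ ‖v₁ - v₂‖ := by
  have a1 := prox_subgrad_ineq g hg v₁ u₁ h1 u₂
  have a2 := prox_subgrad_ineq g hg v₂ u₂ h2 u₁
  have hsum : ⟪v₁ - u₁, u₂ - u₁⟫_ℝ + ⟪v₂ - u₂, u₁ - u₂⟫_ℝ ≤ 0 := by linarith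
  have hre : ‖u₁ - u₂‖^2 ≤ ⟪u₁ - u₂, v₁ - v₂⟫_ℝ := by
    have e1 : ⟪v₂ - u₂, u₁ - u₂⟫_ℝ = - ⟪v₂ - u₂, u₂ - u₁⟫_ℝ := by
      rw [← inner_neg_right]; congr 1; abel
    have e2 : ⟪v₁ - u₁, u₂ - u₁⟫_ℝ - ⟪v₂ - u₂, u₂ - u₁⟫_ℝ
        = ⟪(v₁ - v₂) - (u₁ - u₂), u₂ - u₁⟫_ℝ := by
      rw [← inner_sub_left]; congr 1; abel
    have hA : ⟪v₁ - v₂, u₂ - u₁⟫_ℝ = - ⟪v₁ - v₂, u₁ - u₂⟫_ℝ := by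
      rw [← inner_neg_right]; congr 1; abel
    have hB : ⟪u₁ - u₂, u₂ - u₁⟫_ℝ = - ⟪u₁ - u₂, u₁ - u₂⟫_ℝ := by
      rw [← inner_neg_right]; congr 1; abel
    have e3 : ⟪(v₁ - v₂) - (u₁ - u₂), u₂ - u₁⟫_ℝ
        = - ⟪v₁ - v₂, u₁ - u₂⟫_ℝ + ‖u₁ - u₂‖^2 := by
      rw [inner_sub_left, hA, hB, real_inner_self_eq_norm_sq]; ring
    rw [real_inner_comm]
    nlinarith [hsum, e1, e2, e3]
  have hcs := real_inner_le_norm (u₁ - u₂) (v₁ - v₂)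
  nlinarith [norm_nonneg (u₁ - u₂), norm_nonneg (v₁ - v₂)]

/-- Null-space split of the PGD error bound (equation (2.13)). -/
theorem pgd_error_nullspace_split (n m : ℕ)
    (A : EuclideanSpace ℂ (Fin n) →L[ℂ] EuclideanSpace ℂ (Fin m))
    (b : EuclideanSpace ℂ (Fin m))
    (g : EuclideanSpace ℂ (Fin n) → ℝ) (hg : ConvexOn ℝ Set.univ g)
    (xstar xhat xplus : EuclideanSpace ℂ (Fin n))
    (hstar : ∀ z : EuclideanSpace ℂ (Fin n),
      (1/2) * ‖xstar - (xstar - (ContinuousLinearMap.adjoint A) (A xstar - b))‖^2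
          + g xstar ≤
      (1/2) * ‖z - (xstar - (ContinuousLinearMap.adjoint A) (A xstar - b))‖^2 + g z)
    (hplus : ∀ z : EuclideanSpace ℂ (Fin n),
      (1/2) * ‖xplus - (xhat - (ContinuousLinearMap.adjoint A) (A xhat - b))‖^2
          + g xplus ≤
      (1/2) * ‖z - (xhat - (ContinuousLinearMap.adjoint A) (A xhat - b))‖^2 + g z)
    (s t : EuclideanSpace ℂ (Fin n))
    (hs : s ∈ LinearMap.ker (A : EuclideanSpace ℂ (Fin n) →ₗ[ℂ] EuclideanSpace ℂ (Fin m))) (ht : t ∈ (LinearMap.ker (A : EuclideanSpace ℂ (Fin n) →ₗ[ℂ] EuclideanSpace ℂ (Fin m)))ᗮ)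
    (hst : xhat - xstar = s + t) :
    ‖xplus - xstar‖^2 ≤
      ‖(ContinuousLinearMap.id ℂ (EuclideanSpace ℂ (Fin n))
        - (ContinuousLinearMap.adjoint A).comp A) t‖^2 + ‖s‖^2 := by
  set A' := ContinuousLinearMap.adjoint A
  have hAs : A s = 0 := hs
  have hnon := prox_nonexpansive_s11 g hg (xhat - A' (A xhat - b)) (xstar - A' (A xstar - b))
      xplus xstar hplus hstar
  -- identify the difference of prox inputs
  have hdiff : (xhat - A' (A xhat - b)) - (xstar - A' (A xstar - b))
      = ((ContinuousLinearMap.id ℂ (EuclideanSpace ℂ (Fin n))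
        - A'.comp A) t) + s := by
    have h1 : (xhat - A' (A xhat - b)) - (xstar - A' (A xstar - b))
        = (xhat - xstar) - A' (A (xhat - xstar)) := by
      simp only [map_sub]
      abel
    rw [h1, hst]
    simp only [map_add, hAs, map_zero, ContinuousLinearMap.sub_apply,
      ContinuousLinearMap.id_apply, ContinuousLinearMap.comp_apply, zero_add]
    abel
  -- orthogonality
  have horth : ⟪(ContinuousLinearMap.id ℂ (EuclideanSpace ℂ (Fin n))
      - A'.comp A) t, s⟫_ℂ = 0 := by
    have h1 : ⟪t, s⟫_ℂ = 0 := by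
      have := (Submodule.mem_orthogonal _ t).mp ht s hs
      rw [← inner_conj_symm, this, map_zero]
    have h2 : ⟪A' (A t), s⟫_ℂ = 0 := by
      rw [ContinuousLinearMap.adjoint_inner_left, hAs, inner_zero_right]
    simp only [ContinuousLinearMap.sub_apply, ContinuousLinearMap.id_apply,
      ContinuousLinearMap.comp_apply, inner_sub_left, h1, h2, sub_zero]
  have hpyth : ‖((ContinuousLinearMap.id ℂ (EuclideanSpace ℂ (Fin n))
      - A'.comp A) t) + s‖^2
      = ‖(ContinuousLinearMap.id ℂ (EuclideanSpace ℂ (Fin n))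
        - A'.comp A) t‖^2 + ‖s‖^2 := by
    rw [norm_add_sq_real]
    have : ⟪(ContinuousLinearMap.id ℂ (EuclideanSpace ℂ (Fin n))
        - A'.comp A) t, s⟫_ℝ = 0 := by
      have hrfl : ⟪(ContinuousLinearMap.id ℂ (EuclideanSpace ℂ (Fin n))
          - A'.comp A) t, s⟫_ℝ = (⟪(ContinuousLinearMap.id ℂ (EuclideanSpace ℂ (Fin n))
          - A'.comp A) t, s⟫_ℂ).re := by
        simp [PiLp.inner_apply, Complex.inner, Complex.re_sum]
        rw [← Finset.sum_sub_distrib, ← Finset.sum_sub_distrib]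
        exact Finset.sum_congr rfl (fun _ _ => by ring)
      rw [hrfl, horth]; simp
    rw [this]; ring
  rw [hdiff] at hnon
  nlinarith [hnon, hpyth, norm_nonneg (xplus - xstar),
    norm_nonneg (((ContinuousLinearMap.id ℂ (EuclideanSpace ℂ (Fin n)) - A'.comp A) t) + s)]
end
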